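/- arXiv:1711.05255 — 2 statements merged into one kernel-verified Lean document; each statement's English description precedes it below -/
import Mathlib

section
/- Global asymptotic stability of a single-reservoir ESN (Theorem 1): let W^res be an N×N real matrix with largest singular value (ℓ²-operator norm) strictly less than 1, let W^in be an N×D real matrix, and let u : ℕ → ℝ^D be any input sequence. If x, x̃ : ℕ → ℝ^N are two state sequences both satisfying x(t+1) = tanh.(W^res x(t) + W^in u(t+1)) for all t ∈ ℕ, then ‖x(t) − x̃(t)‖₂ → 0 as t → ∞. -/
/-!
Componentwise `tanh` is 1-Lipschitz for the Euclidean norm, so for every fixed input the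
reservoir update `z ↦ tanh.(W^res z + W^in u)` is Lipschitz with constant `‖W^res‖ < 1`.
Two trajectories driven by the same input are orbits of the same sequence of contractions,
so their distance decays at least like `‖W^res‖ ^ t`.
-/

open Filter Topology

/-- Componentwise hyperbolic tangent on Euclidean space. -/
noncomputable def tanhVec {n : ℕ} (v : EuclideanSpace ℝ (Fin n)) : EuclideanSpace ℝ (Fin n) :=
  WithLp.toLp 2 (fun i => Real.tanh (v i))

/-- The action `x ↦ W x` of a matrix on Euclidean space (equal to `Matrix.mulVec`). -/
noncomputable def mulVecE {m n : ℕ} (W : Matrix (Fin m) (Fin n) ℝ)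
    (x : EuclideanSpace ℝ (Fin n)) : EuclideanSpace ℝ (Fin m) :=
  Matrix.toEuclideanLin W x

/-- The ℓ²-operator norm of a matrix (its largest singular value). -/
noncomputable def opNorm {m n : ℕ} (W : Matrix (Fin m) (Fin n) ℝ) : ℝ :=
  ‖LinearMap.toContinuousLinearMap (Matrix.toEuclideanLin W)‖

open NNReal

namespace Real

theorem hasDerivAt_tanh (x : ℝ) : HasDerivAt tanh (1 / cosh x ^ 2) x := by
  have h := (hasDerivAt_sinh x).div (hasDerivAt_cosh x) (cosh_pos x).ne'
  rw [show sinh / cosh = tanh from funext fun y => (tanh_eq_sinh_div_cosh y).symm] at h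
  refine h.congr_deriv ?_
  rw [← cosh_sq_sub_sinh_sq x]
  ring

theorem lipschitzWith_tanh : LipschitzWith 1 tanh := by
  refine lipschitzWith_of_nnnorm_deriv_le (fun x => (hasDerivAt_tanh x).differentiableAt)
    fun x => ?_
  rw [(hasDerivAt_tanh x).deriv, ← NNReal.coe_le_coe, coe_nnnorm, norm_div, norm_one, norm_pow,
    norm_of_nonneg (cosh_pos x).le, NNReal.coe_one]
  exact div_le_one_of_le₀ (one_le_pow₀ (one_le_cosh x)) (by positivity)

end Real

theorem EuclideanSpace.lipschitzWith_map {ι : Type*} [Fintype ι] {f : ℝ → ℝ} {K : ℝ≥0}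
    (hf : LipschitzWith K f) :
    LipschitzWith K (fun v : EuclideanSpace ℝ ι => WithLp.toLp 2 (fun i => f (v i))) := by
  refine LipschitzWith.of_dist_le_mul fun v w => le_of_sq_le_sq ?_ (by positivity)
  rw [mul_pow, EuclideanSpace.dist_sq_eq, EuclideanSpace.dist_sq_eq, Finset.mul_sum]
  gcongr with i
  rw [← mul_pow]
  gcongr
  exact hf.dist_le_mul (v i) (w i)

theorem lipschitzWith_tanhVec {n : ℕ} : LipschitzWith 1 (tanhVec (n := n)) :=
  EuclideanSpace.lipschitzWith_map Real.lipschitzWith_tanh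

theorem lipschitzWith_mulVecE {m n : ℕ} (W : Matrix (Fin m) (Fin n) ℝ) :
    LipschitzWith (opNorm W).toNNReal (mulVecE W) := by
  have h := (LinearMap.toContinuousLinearMap (Matrix.toEuclideanLin W)).lipschitz
  rwa [← norm_toNNReal] at h

theorem lipschitzWith_tanhVec_mulVecE_add {n : ℕ} (W : Matrix (Fin n) (Fin n) ℝ)
    (b : EuclideanSpace ℝ (Fin n)) :
    LipschitzWith (opNorm W).toNNReal (fun z => tanhVec (mulVecE W z + b)) := by
  have h := lipschitzWith_tanhVec.comp
    ((isometry_add_right b).lipschitz.comp (lipschitzWith_mulVecE W))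
  rwa [one_mul, one_mul] at h

section Contraction

variable {α : Type*} [PseudoMetricSpace α] {K : ℝ≥0} {f : ℕ → α → α} {x y : ℕ → α}

theorem dist_le_geometric_of_lipschitzWith (hf : ∀ t, LipschitzWith K (f t))
    (hx : ∀ t, x (t + 1) = f t (x t)) (hy : ∀ t, y (t + 1) = f t (y t)) (t : ℕ) :
    dist (x t) (y t) ≤ dist (x 0) (y 0) * K ^ t := by
  induction t with
  | zero => simp
  | succ t ih =>
    calc dist (x (t + 1)) (y (t + 1)) ≤ K * dist (x t) (y t) := by
          rw [hx, hy]; exact (hf t).dist_le_mul _ _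
      _ ≤ K * (dist (x 0) (y 0) * K ^ t) := by gcongr
      _ = dist (x 0) (y 0) * K ^ (t + 1) := by ring

theorem tendsto_dist_of_lipschitzWith_lt_one (hf : ∀ t, LipschitzWith K (f t)) (hK : K < 1)
    (hx : ∀ t, x (t + 1) = f t (x t)) (hy : ∀ t, y (t + 1) = f t (y t)) :
    Tendsto (fun t => dist (x t) (y t)) atTop (𝓝 0) := by
  have hgeom : Tendsto (fun t => dist (x 0) (y 0) * (K : ℝ) ^ t) atTop (𝓝 0) := by
    simpa using (tendsto_pow_atTop_nhds_zero_of_lt_one K.2 hK).const_mul (dist (x 0) (y 0))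
  exact squeeze_zero (fun _ => dist_nonneg) (dist_le_geometric_of_lipschitzWith hf hx hy)
    hgeom

end Contraction

/-- Global asymptotic stability of a single-reservoir ESN (Theorem 1). -/
theorem esn_global_asymptotic_stability (N D : ℕ)
    (Wres : Matrix (Fin N) (Fin N) ℝ) (Win : Matrix (Fin N) (Fin D) ℝ)
    (hW : opNorm Wres < 1)
    (u : ℕ → EuclideanSpace ℝ (Fin D))
    (x x' : ℕ → EuclideanSpace ℝ (Fin N))
    (hx : ∀ t, x (t + 1) = tanhVec (mulVecE Wres (x t) + mulVecE Win (u (t + 1))))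
    (hx' : ∀ t, x' (t + 1) = tanhVec (mulVecE Wres (x' t) + mulVecE Win (u (t + 1)))) :
    Tendsto (fun t : ℕ => ‖x t - x' t‖) atTop (𝓝 0) := by
  simpa only [dist_eq_norm] using tendsto_dist_of_lipschitzWith_lt_one
    (fun t => lipschitzWith_tanhVec_mulVecE_add Wres (mulVecE Win (u (t + 1))))
    (Real.toNNReal_lt_one.mpr hW) hx hx'
end

section
/- Two-layer case of the Deep-ESN stability theorem: let W^{res(1)} (N₁×N₁), W^{in(1)} (N₁×D), W^{enc(1)} (M×N₁), W^{res(2)} (N₂×N₂), and W^{in(2)} (N₂×M) be real matrices with ‖W^{res(1)}‖ₒₚ < 1 and ‖W^{res(2)}‖ₒₚ < 1, and let u : ℕ → ℝ^D be any input sequence. If x⁽¹⁾, x̃⁽¹⁾ : ℕ → ℝ^{N₁} and x⁽²⁾, x̃⁽²⁾ : ℕ → ℝ^{N₂} satisfy x⁽¹⁾(t+1) = tanh.(W^{res(1)} x⁽¹⁾(t) + W^{in(1)} u(t+1)) and x⁽²⁾(t+1) = tanh.(W^{res(2)} x⁽²⁾(t) + W^{in(2)} W^{enc(1)} x⁽¹⁾(t+1))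 for all t (and likewise for the tilde sequences with the same u), then ‖x⁽²⁾(t) − x̃⁽²⁾(t)‖₂ → 0 as t → ∞. -/
/-!
The difference of two runs of a reservoir `x(t+1) = tanh.(W x(t) + v(t))` obeys
`‖Δx(t+1)‖ ≤ ‖W‖ ‖Δx(t)‖ + ‖Δv(t)‖`, because `tanh` is 1-Lipschitz (`tanh' = 1 / cosh² ≤ 1`).
With `‖W‖ < 1` such a perturbed contraction forgets its initial state, so `Δx → 0` as soon as
`Δv → 0`. Both runs of the first layer have the same input, so its states synchronise; the input of
the second layer is a linear image of the first layer's state, so its difference tends to zero too.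
-/

open Filter Topology

lemma Real.hasDerivAt_tanh_s11 (x : ℝ) : HasDerivAt Real.tanh (1 / Real.cosh x ^ 2) x := by
  have h := (Real.hasDerivAt_sinh x).div (Real.hasDerivAt_cosh x) (Real.cosh_pos x).ne'
  have hfun : Real.sinh / Real.cosh = Real.tanh :=
    funext fun y => (Real.tanh_eq_sinh_div_cosh y).symm
  rwa [hfun, ← sq, ← sq, Real.cosh_sq_sub_sinh_sq] at h

lemma Real.lipschitzWith_tanh_s11 : LipschitzWith 1 Real.tanh := by
  refine lipschitzWith_of_nnnorm_deriv_le (fun x => (Real.hasDerivAt_tanh_s11 x).differentiableAt)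
    fun x => ?_
  rw [(Real.hasDerivAt_tanh_s11 x).deriv, ← NNReal.coe_le_coe, coe_nnnorm, Real.norm_eq_abs,
    NNReal.coe_one, abs_of_nonneg (by positivity), div_le_one (by positivity)]
  nlinarith [Real.one_le_cosh x]

lemma LipschitzWith.euclideanSpace_map {ι : Type*} [Fintype ι] {K : NNReal} {f : ℝ → ℝ}
    (hf : LipschitzWith K f) :
    LipschitzWith K (fun v : EuclideanSpace ℝ ι => WithLp.toLp 2 (fun i => f (v i))) := by
  refine LipschitzWith.of_dist_le_mul fun v w => ?_
  rw [EuclideanSpace.dist_eq, EuclideanSpace.dist_eq, ← Real.sqrt_sq K.coe_nonneg,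
    ← Real.sqrt_mul (sq_nonneg _), Finset.mul_sum]
  gcongr with i
  rw [← mul_pow]
  exact pow_le_pow_left₀ dist_nonneg (hf.dist_le_mul _ _) 2

lemma norm_tanhVec_sub_le {n : ℕ} (v w : EuclideanSpace ℝ (Fin n)) :
    ‖tanhVec v - tanhVec w‖ ≤ ‖v - w‖ := by
  simpa [← dist_eq_norm, tanhVec] using Real.lipschitzWith_tanh_s11.euclideanSpace_map.dist_le_mul v w

lemma norm_mulVecE_sub_le {m n : ℕ} (W : Matrix (Fin m) (Fin n) ℝ)
    (x y : EuclideanSpace ℝ (Fin n)) : ‖mulVecE W x - mulVecE W y‖ ≤ opNorm W * ‖x - y‖ := by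
  rw [mulVecE, mulVecE, ← map_sub]
  exact (LinearMap.toContinuousLinearMap (Matrix.toEuclideanLin W)).le_opNorm (x - y)

lemma norm_reservoir_step_sub_le {n : ℕ} (W : Matrix (Fin n) (Fin n) ℝ)
    (x x' v v' : EuclideanSpace ℝ (Fin n)) :
    ‖tanhVec (mulVecE W x + v) - tanhVec (mulVecE W x' + v')‖ ≤ opNorm W * ‖x - x'‖ + ‖v - v'‖ :=
  calc ‖tanhVec (mulVecE W x + v) - tanhVec (mulVecE W x' + v')‖
      ≤ ‖(mulVecE W x - mulVecE W x') + (v - v')‖ := by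
        rw [← add_sub_add_comm]; exact norm_tanhVec_sub_le _ _
    _ ≤ opNorm W * ‖x - x'‖ + ‖v - v'‖ :=
        (norm_add_le _ _).trans (add_le_add_left (norm_mulVecE_sub_le W x x') _)

lemma tendsto_zero_of_le_mul_add {c : ℝ} (hc0 : 0 ≤ c) (hc1 : c < 1) {y b : ℕ → ℝ}
    (hy : ∀ t, 0 ≤ y t) (hrec : ∀ t, y (t + 1) ≤ c * y t + b t)
    (hb : Tendsto b atTop (𝓝 0)) : Tendsto y atTop (𝓝 0) := by
  refine tendsto_order.2 ⟨fun a ha => Eventually.of_forall fun t => ha.trans_le (hy t),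
    fun ε hε => ?_⟩
  obtain ⟨T, hT⟩ := eventually_atTop.1
    (hb.eventually (ge_mem_nhds (by positivity : (0 : ℝ) < (1 - c) * (ε / 2))))
  -- once `b ≤ (1 - c) ε / 2`, the excess `y - ε / 2` contracts by the factor `c`
  have hgeom : ∀ n, y (T + n) - ε / 2 ≤ c ^ n * (y T - ε / 2) := by
    intro n
    induction n with
    | zero => simp
    | succ n ih =>
      have hstep := hrec (T + n)
      have hbT := hT (T + n) le_self_add
      rw [← add_assoc, pow_succ', mul_assoc]
      linarith [mul_le_mul_of_nonneg_left ih hc0]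
  have hpow : Tendsto (fun n => c ^ n * (y T - ε / 2)) atTop (𝓝 0) := by
    simpa using (tendsto_pow_atTop_nhds_zero_of_lt_one hc0 hc1).mul_const (y T - ε / 2)
  obtain ⟨n₀, hn₀⟩ := eventually_atTop.1 (hpow.eventually (gt_mem_nhds (half_pos hε)))
  refine eventually_atTop.2 ⟨T + n₀, fun t ht => ?_⟩
  obtain ⟨n, rfl⟩ := Nat.exists_eq_add_of_le ht
  have hexcess := hgeom (n₀ + n)
  have hsmall := hn₀ (n₀ + n) le_self_add
  rw [← add_assoc] at hexcess
  linarith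

lemma tendsto_norm_sub_zero_of_reservoir {n : ℕ} (W : Matrix (Fin n) (Fin n) ℝ)
    (hW : opNorm W < 1) {v v' x x' : ℕ → EuclideanSpace ℝ (Fin n)}
    (hx : ∀ t, x (t + 1) = tanhVec (mulVecE W (x t) + v t))
    (hx' : ∀ t, x' (t + 1) = tanhVec (mulVecE W (x' t) + v' t))
    (hv : Tendsto (fun t => ‖v t - v' t‖) atTop (𝓝 0)) :
    Tendsto (fun t => ‖x t - x' t‖) atTop (𝓝 0) :=
  tendsto_zero_of_le_mul_add (norm_nonneg _) hW (fun t => norm_nonneg _)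
    (fun t => by rw [hx, hx']; exact norm_reservoir_step_sub_le W _ _ _ _) hv

/-- Two-layer case of the Deep-ESN stability theorem. -/
theorem deep_esn_two_layer_stability (N₁ N₂ M D : ℕ)
    (Wres1 : Matrix (Fin N₁) (Fin N₁) ℝ) (Win1 : Matrix (Fin N₁) (Fin D) ℝ)
    (Wenc1 : Matrix (Fin M) (Fin N₁) ℝ)
    (Wres2 : Matrix (Fin N₂) (Fin N₂) ℝ) (Win2 : Matrix (Fin N₂) (Fin M) ℝ)
    (hW1 : opNorm Wres1 < 1) (hW2 : opNorm Wres2 < 1)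
    (u : ℕ → EuclideanSpace ℝ (Fin D))
    (x1 x1' : ℕ → EuclideanSpace ℝ (Fin N₁))
    (x2 x2' : ℕ → EuclideanSpace ℝ (Fin N₂))
    (hx1 : ∀ t, x1 (t + 1) = tanhVec (mulVecE Wres1 (x1 t) + mulVecE Win1 (u (t + 1))))
    (hx1' : ∀ t, x1' (t + 1) = tanhVec (mulVecE Wres1 (x1' t) + mulVecE Win1 (u (t + 1))))
    (hx2 : ∀ t, x2 (t + 1) =
      tanhVec (mulVecE Wres2 (x2 t) + mulVecE Win2 (mulVecE Wenc1 (x1 (t + 1)))))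
    (hx2' : ∀ t, x2' (t + 1) =
      tanhVec (mulVecE Wres2 (x2' t) + mulVecE Win2 (mulVecE Wenc1 (x1' (t + 1))))) :
    Tendsto (fun t : ℕ => ‖x2 t - x2' t‖) atTop (𝓝 0) := by
  have hlayer1 : Tendsto (fun t => ‖x1 t - x1' t‖) atTop (𝓝 0) :=
    tendsto_norm_sub_zero_of_reservoir Wres1 hW1 hx1 hx1' (by simp)
  refine tendsto_norm_sub_zero_of_reservoir Wres2 hW2 hx2 hx2' ?_
  refine squeeze_zero (fun t => norm_nonneg _) (fun t => (norm_mulVecE_sub_le _ _ _).trans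
    (mul_le_mul_of_nonneg_left (norm_mulVecE_sub_le _ _ _) (norm_nonneg _))) ?_
  simpa using ((hlayer1.comp (tendsto_add_atTop_nat 1)).const_mul (opNorm Wenc1)).const_mul
    (opNorm Win2)
end
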